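/- For every irrational x ∈ (0,1) and every integer n ≥ 1, the following hold for the OOCF convergents of x (setting p''_0 = 0, q''_0 = 1): (i) p_n/q_n lies strictly between p'_n/q'_n and p''_n/q''_n; (ii) p_{n−1}/q_{n−1} does not lie between p'_n/q'_n and p''_n/q''_n; (iii) the three pairwise distinct rationals p_n/q_n, p'_n/q'_n, p''_n/q''_n all lie in the half-open interval whose endpoints are p_{n−1}/q_{n−1} and p''_{n−1}/q''_{n−1}, containing p''_{n−1}/q''_{n−1} and not containing p_{n−1}/q_{n−1}. -/

import Mathlib

/-!
Write `u_n = (p_n, q_n)` and `v_n = (p''_n, q''_n)`. The recursion reads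
`(p'_{n+1}, q'_{n+1}) = (a - 1) u_n + v_n`, `v_{n+1} = (a - 1 + ε) u_n + v_n` and
`u_{n+1} = (2a - 2 + ε) u_n + 2 v_n`, where `a ≥ 1` and `a + ε ≥ 1` as long as `T^n x ∈ (0, 1)`,
which irrationality guarantees. So all fractions involved are weighted mediants
`(α p_n + β p''_n) / (α q_n + β q''_n)` with `α, β ≥ 0`. The cross determinant of two of them is
`(α₁ β₂ - β₁ α₂) · det (u_n, v_n)`; as `q_n, q''_n > 0` and `det (u_n, v_n) ≠ 0` persist along the
recursion, the mediants are ordered like the ratios `α / β ∈ [0, ∞]`. On this scale `v_n` sits at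
`0`, `u_n` at `∞`, and `p'_{n+1} / q'_{n+1}`, `p_{n+1} / q_{n+1}`, `p''_{n+1} / q''_{n+1}` at
`a - 1`, `a - 1 + ε / 2`, `a - 1 + ε`.
-/

/-- The odd-odd continued fraction map on `[0,1]`.  For `x ∈ [(k-1)/k, k/(k+1))` with `k ≥ 1`
one has `k = ⌊1/(1-x)⌋`, and the two branches are separated by `(2k-1)/(2k+1)`. -/
noncomputable def oocfT (x : ℝ) : ℝ :=
  if x = 1 then 1
  else if x < (2 * (⌊1 / (1 - x)⌋ : ℝ) - 1) / (2 * (⌊1 / (1 - x)⌋ : ℝ) + 1) then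
    ((⌊1 / (1 - x)⌋ : ℝ) * x - ((⌊1 / (1 - x)⌋ : ℝ) - 1)) /
      ((⌊1 / (1 - x)⌋ : ℝ) - ((⌊1 / (1 - x)⌋ : ℝ) + 1) * x)
  else
    ((⌊1 / (1 - x)⌋ : ℝ) - ((⌊1 / (1 - x)⌋ : ℝ) + 1) * x) /
      ((⌊1 / (1 - x)⌋ : ℝ) * x - ((⌊1 / (1 - x)⌋ : ℝ) - 1))

/-- OOCF partial quotient `a` of a point `y`: `a = k+1` if `y` is in the lower branch
interval `((k-1)/k, (2k-1)/(2k+1))`, and `a = k` if `y ∈ ((2k-1)/(2k+1), k/(k+1))`,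
where `k = ⌊1/(1-y)⌋`. -/
noncomputable def oocfA (y : ℝ) : ℤ :=
  if y < (2 * (⌊1 / (1 - y)⌋ : ℝ) - 1) / (2 * (⌊1 / (1 - y)⌋ : ℝ) + 1) then ⌊1 / (1 - y)⌋ + 1
  else ⌊1 / (1 - y)⌋

/-- OOCF partial quotient `ε` of a point `y`: `ε = -1` on the lower branch interval and
`ε = 1` on the upper one. -/
noncomputable def oocfE (y : ℝ) : ℤ :=
  if y < (2 * (⌊1 / (1 - y)⌋ : ℝ) - 1) / (2 * (⌊1 / (1 - y)⌋ : ℝ) + 1) then -1 else 1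

/-- The OOCF convergents `(p'_n, q'_n, p_n, q_n)` of `x`, defined by
`p'_0 = 1, q'_0 = 0, p_0 = 1, q_0 = 1` and
`p'_n = a_n p_{n-1} - p'_{n-1}`, `q'_n = a_n q_{n-1} - q'_{n-1}`,
`p_n = 2 p'_n + ε_n p_{n-1}`, `q_n = 2 q'_n + ε_n q_{n-1}`,
where `(a_n, ε_n)` are the partial quotients of `x`, i.e. `a_n = oocfA (oocfT^[n-1] x)`,
`ε_n = oocfE (oocfT^[n-1] x)`. -/
noncomputable def oocfConv (x : ℝ) : ℕ → ℤ × ℤ × ℤ × ℤ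
  | 0 => (1, 0, 1, 1)
  | n + 1 =>
    let c := oocfConv x n
    (oocfA (oocfT^[n] x) * c.2.2.1 - c.1,
     oocfA (oocfT^[n] x) * c.2.2.2 - c.2.1,
     2 * (oocfA (oocfT^[n] x) * c.2.2.1 - c.1) + oocfE (oocfT^[n] x) * c.2.2.1,
     2 * (oocfA (oocfT^[n] x) * c.2.2.2 - c.2.1) + oocfE (oocfT^[n] x) * c.2.2.2)

/-- `n`-th sub-convergent numerator `p'_n`. -/
noncomputable def oocfP' (x : ℝ) (n : ℕ) : ℤ := (oocfConv x n).1

/-- `n`-th sub-convergent denominator `q'_n`. -/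
noncomputable def oocfQ' (x : ℝ) (n : ℕ) : ℤ := (oocfConv x n).2.1

/-- `n`-th principal convergent numerator `p_n`. -/
noncomputable def oocfP (x : ℝ) (n : ℕ) : ℤ := (oocfConv x n).2.2.1

/-- `n`-th principal convergent denominator `q_n`. -/
noncomputable def oocfQ (x : ℝ) (n : ℕ) : ℤ := (oocfConv x n).2.2.2

/-- `n`-th pseudo-convergent numerator: `p''_n = p'_n + ε_n p_{n-1}` for `n ≥ 1`
(with the convention `p''_0 = 0`). -/
noncomputable def oocfP'' (x : ℝ) : ℕ → ℤ
  | 0 => 0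
  | n + 1 => oocfP' x (n + 1) + oocfE (oocfT^[n] x) * oocfP x n

/-- `n`-th pseudo-convergent denominator: `q''_n = q'_n + ε_n q_{n-1}` for `n ≥ 1`
(with the convention `q''_0 = 1`). -/
noncomputable def oocfQ'' (x : ℝ) : ℕ → ℤ
  | 0 => 1
  | n + 1 => oocfQ' x (n + 1) + oocfE (oocfT^[n] x) * oocfQ x n

/-- `c` lies strictly between `a` and `b`. -/
def StrictlyBetween (c a b : ℝ) : Prop := (a < c ∧ c < b) ∨ (b < c ∧ c < a)

/-- `c` lies (weakly) between `a` and `b`. -/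
def Between (c a b : ℝ) : Prop := (a ≤ c ∧ c ≤ b) ∨ (b ≤ c ∧ c ≤ a)

/-- `y` lies in the half-open interval with endpoints `c` and `d`, containing `d` but
not `c`. -/
def InHalfOpen (y c d : ℝ) : Prop := (c < y ∧ y ≤ d) ∨ (d ≤ y ∧ y < c)


open Set

lemma strictlyBetween_of_mul_pos {a b c : ℝ} (h : 0 < (c - a) * (b - c)) :
    StrictlyBetween c a b := by
  rcases mul_pos_iff.mp h with ⟨h₁, h₂⟩ | ⟨h₁, h₂⟩
  · exact Or.inl ⟨by linarith, by linarith⟩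
  · exact Or.inr ⟨by linarith, by linarith⟩

lemma not_between_of_mul_neg {a b c : ℝ} (h : (c - a) * (b - c) < 0) : ¬ Between c a b := by
  rintro (⟨h₁, h₂⟩ | ⟨h₁, h₂⟩)
  · exact h.not_ge (mul_nonneg (by linarith) (by linarith))
  · exact h.not_ge (mul_nonneg_of_nonpos_of_nonpos (by linarith) (by linarith))

lemma inHalfOpen_of_mul_nonneg {c d y : ℝ} (h : 0 ≤ (y - c) * (d - y)) (hne : y ≠ c) :
    InHalfOpen y c d := by
  rcases hne.lt_or_gt with hlt | hgt
  · exact Or.inr ⟨by nlinarith, hlt⟩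
  · exact Or.inl ⟨hgt, by nlinarith⟩

section WeightedMediant

variable {K : Type*} [Field K]

def weightedMediant (p q r s α β : K) : K := (α * p + β * r) / (α * q + β * s)

lemma weightedMediant_one_zero (p q r s : K) : weightedMediant p q r s 1 0 = p / q := by
  simp [weightedMediant]

lemma weightedMediant_zero_one (p q r s : K) : weightedMediant p q r s 0 1 = r / s := by
  simp [weightedMediant]

lemma weightedMediant_sub_weightedMediant {p q r s α₁ β₁ α₂ β₂ : K}
    (h₁ : α₁ * q + β₁ * s ≠ 0) (h₂ : α₂ * q + β₂ * s ≠ 0) :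
    weightedMediant p q r s α₁ β₁ - weightedMediant p q r s α₂ β₂ =
      (α₁ * β₂ - β₁ * α₂) * (p * s - r * q) / ((α₁ * q + β₁ * s) * (α₂ * q + β₂ * s)) := by
  rw [weightedMediant, weightedMediant, div_sub_div _ _ h₁ h₂]
  ring

lemma weightedMediant_ne_weightedMediant {p q r s α₁ β₁ α₂ β₂ : K} (hD : p * s - r * q ≠ 0)
    (h₁ : α₁ * q + β₁ * s ≠ 0) (h₂ : α₂ * q + β₂ * s ≠ 0) (h : α₁ * β₂ - β₁ * α₂ ≠ 0) :
    weightedMediant p q r s α₁ β₁ ≠ weightedMediant p q r s α₂ β₂ := by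
  rw [← sub_ne_zero, weightedMediant_sub_weightedMediant h₁ h₂]
  exact div_ne_zero (mul_ne_zero h hD) (mul_ne_zero h₁ h₂)

end WeightedMediant

section Position

variable {p q r s α₁ β₁ α₂ β₂ α₃ β₃ : ℝ}

lemma weightedMediant_sub_mul_sub
    (h₁ : 0 < α₁ * q + β₁ * s) (h₂ : 0 < α₂ * q + β₂ * s) (h₃ : 0 < α₃ * q + β₃ * s) :
    (weightedMediant p q r s α₁ β₁ - weightedMediant p q r s α₂ β₂) *
        (weightedMediant p q r s α₃ β₃ - weightedMediant p q r s α₁ β₁) =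
      (α₁ * β₂ - β₁ * α₂) * (α₃ * β₁ - β₃ * α₁) *
        ((p * s - r * q) ^ 2 / ((α₁ * q + β₁ * s) ^ 2 * (α₂ * q + β₂ * s) * (α₃ * q + β₃ * s))) := by
  rw [weightedMediant_sub_weightedMediant h₁.ne' h₂.ne',
    weightedMediant_sub_weightedMediant h₃.ne' h₁.ne']
  field_simp

lemma strictlyBetween_weightedMediant (hD : p * s - r * q ≠ 0)
    (h₁ : 0 < α₁ * q + β₁ * s) (h₂ : 0 < α₂ * q + β₂ * s) (h₃ : 0 < α₃ * q + β₃ * s)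
    (h : 0 < (α₁ * β₂ - β₁ * α₂) * (α₃ * β₁ - β₃ * α₁)) :
    StrictlyBetween (weightedMediant p q r s α₁ β₁) (weightedMediant p q r s α₂ β₂)
      (weightedMediant p q r s α₃ β₃) := by
  apply strictlyBetween_of_mul_pos
  rw [weightedMediant_sub_mul_sub h₁ h₂ h₃]
  positivity

lemma inHalfOpen_weightedMediant (hq : 0 < q) (hs : 0 < s) (hD : p * s - r * q ≠ 0)
    (hα : 0 ≤ α₁) (hβ : 0 < β₁) :
    InHalfOpen (weightedMediant p q r s α₁ β₁) (p / q) (r / s) := by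
  have h₁ : 0 < α₁ * q + β₁ * s := by positivity
  have hu : 0 < 1 * q + 0 * s := by simpa
  have hv : 0 < 0 * q + 1 * s := by simpa
  rw [← weightedMediant_one_zero p q r s, ← weightedMediant_zero_one p q r s]
  refine inHalfOpen_of_mul_nonneg ?_ ?_
  · rw [weightedMediant_sub_mul_sub h₁ hu hv]
    have : 0 ≤ (α₁ * 0 - β₁ * 1) * (0 * β₁ - 1 * α₁) := by nlinarith
    positivity
  · exact weightedMediant_ne_weightedMediant hD h₁.ne' hu.ne' (by simpa using hβ.ne')

lemma not_between_div_weightedMediant (hq : 0 < q) (hs : 0 < s) (hD : p * s - r * q ≠ 0)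
    (hα₁ : 0 ≤ α₁) (hβ₁ : 0 < β₁) (hα₂ : 0 ≤ α₂) (hβ₂ : 0 < β₂) :
    ¬ Between (p / q) (weightedMediant p q r s α₁ β₁) (weightedMediant p q r s α₂ β₂) := by
  have hu : 0 < 1 * q + 0 * s := by simpa
  rw [← weightedMediant_one_zero p q r s]
  refine not_between_of_mul_neg ?_
  rw [weightedMediant_sub_mul_sub hu (by positivity) (by positivity)]
  refine mul_neg_of_neg_of_pos (by nlinarith) ?_
  positivity

end Position

lemma weightedMediant_relative_position {p q r s t e : ℝ} (hq : 0 < q) (hs : 0 < s)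
    (hD : p * s - r * q ≠ 0) (ht : 0 ≤ t) (hte : 0 ≤ t + e) (he : e ≠ 0) :
    StrictlyBetween (weightedMediant p q r s (2 * t + e) 2) (weightedMediant p q r s t 1)
        (weightedMediant p q r s (t + e) 1) ∧
      ¬ Between (p / q) (weightedMediant p q r s t 1) (weightedMediant p q r s (t + e) 1) ∧
      (weightedMediant p q r s (2 * t + e) 2 ≠ weightedMediant p q r s t 1 ∧
        weightedMediant p q r s (2 * t + e) 2 ≠ weightedMediant p q r s (t + e) 1 ∧
        weightedMediant p q r s t 1 ≠ weightedMediant p q r s (t + e) 1) ∧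
      InHalfOpen (weightedMediant p q r s (2 * t + e) 2) (p / q) (r / s) ∧
      InHalfOpen (weightedMediant p q r s t 1) (p / q) (r / s) ∧
      InHalfOpen (weightedMediant p q r s (t + e) 1) (p / q) (r / s) := by
  have h2te : 0 ≤ 2 * t + e := by linarith
  have hP : 0 < (2 * t + e) * q + 2 * s := by positivity
  have hP' : 0 < t * q + 1 * s := by positivity
  have hP'' : 0 < (t + e) * q + 1 * s := by positivity
  refine ⟨strictlyBetween_weightedMediant hD hP hP' hP'' (by ring_nf; positivity),
    not_between_div_weightedMediant hq hs hD ht one_pos hte one_pos,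
    ⟨weightedMediant_ne_weightedMediant hD hP.ne' hP'.ne' (by ring_nf; exact he),
      weightedMediant_ne_weightedMediant hD hP.ne' hP''.ne' (by ring_nf; exact neg_ne_zero.2 he),
      weightedMediant_ne_weightedMediant hD hP'.ne' hP''.ne' (by ring_nf; exact neg_ne_zero.2 he)⟩,
    inHalfOpen_weightedMediant hq hs hD h2te two_pos,
    inHalfOpen_weightedMediant hq hs hD ht one_pos,
    inHalfOpen_weightedMediant hq hs hD hte one_pos⟩

lemma Irrational.intLinearFractional {y : ℝ} (hy : Irrational y) {a b c d : ℤ}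
    (h : a * d - b * c ≠ 0) : Irrational ((a * y + b) / (c * y + d)) := by
  rintro ⟨r, hr⟩
  have hden : (c : ℝ) * y + d ≠ 0 := by
    rcases eq_or_ne c 0 with rfl | hc
    · rintro hd
      simp only [Int.cast_zero, zero_mul, zero_add, Int.cast_eq_zero] at hd
      simp [hd] at h
    · exact ((hy.intCast_mul hc).add_intCast d).ne_zero
  rw [eq_div_iff hden] at hr
  rcases eq_or_ne ((r : ℝ) * c - a) 0 with hra | hra
  · refine h (Int.cast_injective (α := ℝ) ?_)
    push_cast
    linear_combination (-(d + c * y)) * hra + c * hr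
  · refine hy ⟨(b - r * d) / (r * c - a), ?_⟩
    push_cast
    rw [div_eq_iff hra]
    linear_combination -hr

lemma one_le_floor_one_div_one_sub {y : ℝ} (h₀ : 0 ≤ y) (h₁ : y < 1) :
    1 ≤ ⌊1 / (1 - y)⌋ :=
  Int.le_floor.mpr (by rw [Int.cast_one, le_div_iff₀ (by linarith)]; linarith)

lemma oocfE_ne_zero (y : ℝ) : oocfE y ≠ 0 := by
  unfold oocfE
  split_ifs <;> decide

lemma one_le_oocfA {y : ℝ} (h₀ : 0 ≤ y) (h₁ : y < 1) : 1 ≤ oocfA y := by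
  have := one_le_floor_one_div_one_sub h₀ h₁
  unfold oocfA
  split_ifs <;> omega

lemma one_le_oocfA_add_oocfE {y : ℝ} (h₀ : 0 ≤ y) (h₁ : y < 1) : 1 ≤ oocfA y + oocfE y := by
  have := one_le_floor_one_div_one_sub h₀ h₁
  unfold oocfA oocfE
  split_ifs <;> omega

def oocfDomain : Set ℝ := Ioo 0 1 ∩ {y | Irrational y}

lemma oocfT_mapsTo : MapsTo oocfT oocfDomain oocfDomain := by
  rintro y ⟨⟨hy₀, hy₁⟩, hirr⟩
  have hk₁ := one_le_floor_one_div_one_sub hy₀.le hy₁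
  have hk_le : (⌊1 / (1 - y)⌋ : ℝ) * (1 - y) ≤ 1 :=
    (le_div_iff₀ (by linarith)).mp (Int.floor_le _)
  have hk_lt : 1 < ((⌊1 / (1 - y)⌋ : ℝ) + 1) * (1 - y) :=
    (div_lt_iff₀ (by linarith)).mp (Int.lt_floor_add_one _)
  rw [oocfT, if_neg hy₁.ne]
  generalize ⌊1 / (1 - y)⌋ = k at hk₁ hk_le hk_lt ⊢
  have hk : (1 : ℝ) ≤ k := by exact_mod_cast hk₁
  have hlow : 0 < k * y - (k - 1) := by
    refine lt_of_le_of_ne (by linarith) (Ne.symm ?_)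
    simpa using ((hirr.intCast_mul (by omega : k ≠ 0)).sub_intCast (k - 1)).ne_zero
  have hhigh : 0 < k - (k + 1) * y := by linarith
  have hmid : (2 * k + 1) * y - (2 * k - 1) ≠ 0 := by
    simpa using ((hirr.intCast_mul (by omega : 2 * k + 1 ≠ 0)).sub_intCast (2 * k - 1)).ne_zero
  have hmid_iff : y < (2 * k - 1) / (2 * k + 1) ↔ (2 * k + 1) * y - (2 * k - 1) < 0 := by
    rw [lt_div_iff₀ (by linarith)]
    constructor <;> intro <;> linarith
  split_ifs with hb
  · refine ⟨⟨div_pos hlow hhigh, (div_lt_one hhigh).2 (by linarith [hmid_iff.1 hb])⟩, ?_⟩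
    convert hirr.intLinearFractional (a := k) (b := 1 - k) (c := -(k + 1)) (d := k)
      (by ring_nf; omega) using 2
    push_cast
    ring
  · have hb' : 0 < (2 * k + 1) * y - (2 * k - 1) :=
      lt_of_le_of_ne (not_lt.mp (mt hmid_iff.2 hb)) hmid.symm
    refine ⟨⟨div_pos hhigh hlow, (div_lt_one hlow).2 (by linarith)⟩, ?_⟩
    convert hirr.intLinearFractional (a := -(k + 1)) (b := k) (c := k) (d := 1 - k)
      (by ring_nf; omega) using 2
    push_cast
    ring

section Convergents

variable (x : ℝ) (n : ℕ)

lemma oocfP''_eq_sub : oocfP'' x n = oocfP x n - oocfP' x n := by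
  cases n <;> simp only [oocfP'', oocfP, oocfP', oocfConv] <;> ring

lemma oocfQ''_eq_sub : oocfQ'' x n = oocfQ x n - oocfQ' x n := by
  cases n <;> simp only [oocfQ'', oocfQ, oocfQ', oocfConv] <;> ring

lemma oocfP'_succ :
    oocfP' x (n + 1) = (oocfA (oocfT^[n] x) - 1) * oocfP x n + oocfP'' x n := by
  rw [oocfP''_eq_sub]; simp only [oocfP', oocfP, oocfConv]; ring

lemma oocfQ'_succ :
    oocfQ' x (n + 1) = (oocfA (oocfT^[n] x) - 1) * oocfQ x n + oocfQ'' x n := by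
  rw [oocfQ''_eq_sub]; simp only [oocfQ', oocfQ, oocfConv]; ring

lemma oocfP''_succ : oocfP'' x (n + 1) =
    (oocfA (oocfT^[n] x) - 1 + oocfE (oocfT^[n] x)) * oocfP x n + oocfP'' x n := by
  rw [oocfP'', oocfP'_succ]; ring

lemma oocfQ''_succ : oocfQ'' x (n + 1) =
    (oocfA (oocfT^[n] x) - 1 + oocfE (oocfT^[n] x)) * oocfQ x n + oocfQ'' x n := by
  rw [oocfQ'', oocfQ'_succ]; ring

lemma oocfP_succ : oocfP x (n + 1) =
    (2 * oocfA (oocfT^[n] x) - 2 + oocfE (oocfT^[n] x)) * oocfP x n + 2 * oocfP'' x n := by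
  rw [oocfP''_eq_sub]; simp only [oocfP', oocfP, oocfConv]; ring

lemma oocfQ_succ : oocfQ x (n + 1) =
    (2 * oocfA (oocfT^[n] x) - 2 + oocfE (oocfT^[n] x)) * oocfQ x n + 2 * oocfQ'' x n := by
  rw [oocfQ''_eq_sub]; simp only [oocfQ', oocfQ, oocfConv]; ring

lemma oocfP_div_oocfQ_succ : (oocfP x (n + 1) : ℝ) / oocfQ x (n + 1) =
    weightedMediant (oocfP x n : ℝ) (oocfQ x n) (oocfP'' x n) (oocfQ'' x n)
      (2 * ((oocfA (oocfT^[n] x) : ℝ) - 1) + oocfE (oocfT^[n] x)) 2 := by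
  rw [oocfP_succ, oocfQ_succ, weightedMediant]
  push_cast
  ring_nf

lemma oocfP'_div_oocfQ'_succ : (oocfP' x (n + 1) : ℝ) / oocfQ' x (n + 1) =
    weightedMediant (oocfP x n : ℝ) (oocfQ x n) (oocfP'' x n) (oocfQ'' x n)
      ((oocfA (oocfT^[n] x) : ℝ) - 1) 1 := by
  rw [oocfP'_succ, oocfQ'_succ, weightedMediant]
  push_cast
  ring_nf

lemma oocfP''_div_oocfQ''_succ : (oocfP'' x (n + 1) : ℝ) / oocfQ'' x (n + 1) =
    weightedMediant (oocfP x n : ℝ) (oocfQ x n) (oocfP'' x n) (oocfQ'' x n)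
      ((oocfA (oocfT^[n] x) : ℝ) - 1 + oocfE (oocfT^[n] x)) 1 := by
  rw [oocfP''_succ, oocfQ''_succ, weightedMediant]
  push_cast
  ring_nf

end Convergents

lemma oocf_denominators_pos_and_det_ne_zero {x : ℝ} (hx : x ∈ oocfDomain) (n : ℕ) :
    0 < oocfQ x n ∧ 0 < oocfQ'' x n ∧ oocfP x n * oocfQ'' x n - oocfP'' x n * oocfQ x n ≠ 0 := by
  induction n with
  | zero => simp [oocfQ, oocfQ'', oocfP, oocfP'', oocfConv]
  | succ n ih =>
    obtain ⟨hq, hq'', hD⟩ := ih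
    obtain ⟨⟨hy₀, hy₁⟩, -⟩ := oocfT_mapsTo.iterate n hx
    have ha := one_le_oocfA hy₀.le hy₁
    have hae := one_le_oocfA_add_oocfE hy₀.le hy₁
    rw [oocfP_succ, oocfQ_succ, oocfP''_succ, oocfQ''_succ]
    refine ⟨by nlinarith, by nlinarith, ?_⟩
    convert mul_ne_zero (neg_ne_zero.mpr (oocfE_ne_zero (oocfT^[n] x))) hD using 1
    ring

/-- Relative position of the OOCF convergents: for `n ≥ 1`, (i) `p_n/q_n` lies strictly
between `p'_n/q'_n` and `p''_n/q''_n`; (ii) `p_{n-1}/q_{n-1}` does not lie between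
`p'_n/q'_n` and `p''_n/q''_n`; (iii) the three pairwise distinct rationals `p_n/q_n`,
`p'_n/q'_n`, `p''_n/q''_n` lie in the half-open interval with endpoints
`p_{n-1}/q_{n-1}` (excluded) and `p''_{n-1}/q''_{n-1}` (included). -/
theorem oocf_relative_position_of_convergents
    (x : ℝ) (hx : x ∈ Set.Ioo (0 : ℝ) 1) (hirr : Irrational x)
    (n : ℕ) (hn : 1 ≤ n) :
    StrictlyBetween ((oocfP x n : ℝ) / (oocfQ x n : ℝ))
        ((oocfP' x n : ℝ) / (oocfQ' x n : ℝ)) ((oocfP'' x n : ℝ) / (oocfQ'' x n : ℝ)) ∧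
      ¬ Between ((oocfP x (n - 1) : ℝ) / (oocfQ x (n - 1) : ℝ))
        ((oocfP' x n : ℝ) / (oocfQ' x n : ℝ)) ((oocfP'' x n : ℝ) / (oocfQ'' x n : ℝ)) ∧
      ((oocfP x n : ℝ) / (oocfQ x n : ℝ) ≠ (oocfP' x n : ℝ) / (oocfQ' x n : ℝ) ∧
        (oocfP x n : ℝ) / (oocfQ x n : ℝ) ≠ (oocfP'' x n : ℝ) / (oocfQ'' x n : ℝ) ∧
        (oocfP' x n : ℝ) / (oocfQ' x n : ℝ) ≠ (oocfP'' x n : ℝ) / (oocfQ'' x n : ℝ)) ∧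
      InHalfOpen ((oocfP x n : ℝ) / (oocfQ x n : ℝ))
        ((oocfP x (n - 1) : ℝ) / (oocfQ x (n - 1) : ℝ))
        ((oocfP'' x (n - 1) : ℝ) / (oocfQ'' x (n - 1) : ℝ)) ∧
      InHalfOpen ((oocfP' x n : ℝ) / (oocfQ' x n : ℝ))
        ((oocfP x (n - 1) : ℝ) / (oocfQ x (n - 1) : ℝ))
        ((oocfP'' x (n - 1) : ℝ) / (oocfQ'' x (n - 1) : ℝ)) ∧
      InHalfOpen ((oocfP'' x n : ℝ) / (oocfQ'' x n : ℝ))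
        ((oocfP x (n - 1) : ℝ) / (oocfQ x (n - 1) : ℝ))
        ((oocfP'' x (n - 1) : ℝ) / (oocfQ'' x (n - 1) : ℝ)) := by
  obtain ⟨m, rfl⟩ : ∃ m, n = m + 1 := ⟨n - 1, by omega⟩
  rw [Nat.add_sub_cancel, oocfP_div_oocfQ_succ, oocfP'_div_oocfQ'_succ, oocfP''_div_oocfQ''_succ]
  obtain ⟨hq, hq'', hD⟩ := oocf_denominators_pos_and_det_ne_zero ⟨hx, hirr⟩ m
  obtain ⟨⟨hy₀, hy₁⟩, -⟩ := oocfT_mapsTo.iterate m ⟨hx, hirr⟩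
  have ha : (1 : ℝ) ≤ oocfA (oocfT^[m] x) := by exact_mod_cast one_le_oocfA hy₀.le hy₁
  have hae : (1 : ℝ) ≤ oocfA (oocfT^[m] x) + oocfE (oocfT^[m] x) := by
    exact_mod_cast one_le_oocfA_add_oocfE hy₀.le hy₁
  exact weightedMediant_relative_position (by exact_mod_cast hq) (by exact_mod_cast hq'')
    (by exact_mod_cast hD) (by linarith) (by linarith) (mod_cast oocfE_ne_zero _)
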